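/- Let p be a prime and n ≥ 1. Consider the ideals of ℤ[x]: I_n = {f ∈ ℤ[x] : f(a) ≡ 0 (mod p^n) for all a ∈ ℤ} and J_n = the ideal generated by {p^{n−k}·(x^p−x)^k : 0 ≤ k ≤ n}. Then the index of I_n in ℤ[x] (as additive groups) is p^{Σ_{k=1}^n β_p(k)}, the index of J_n in ℤ[x] is p^{p+2p+⋯+np}, and J_n = I_n if and only if n ≤ p; for n > p, J_n is properly contained in I_n. -/

import Mathlib

/-- `α_p(n)`: the `p`-adic valuation of `n!`. -/
def alphaP (p n : ℕ) : ℕ := padicValNat p (Nat.factorial n)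

/-- `β_p(n)`: the least `m` with `α_p(m) ≥ n`. -/
noncomputable def betaP (p n : ℕ) : ℕ := sInf {m | n ≤ alphaP p m}

/-- The ideal `I_n = {f ∈ ℤ[x] : p^n ∣ f(a) for all a ∈ ℤ}`. -/
noncomputable def idealI (p n : ℕ) : Ideal (Polynomial ℤ) where
  carrier := {f | ∀ a : ℤ, (p : ℤ) ^ n ∣ f.eval a}
  add_mem' := fun hf hg a => by
    simpa [Polynomial.eval_add] using dvd_add (hf a) (hg a)
  zero_mem' := fun a => by simp
  smul_mem' := fun c f hf a => by
    simpa [Polynomial.eval_mul, smul_eq_mul] using (hf a).mul_left (c.eval a)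

/-- The ideal `J_n` generated by `p^{n-k}(x^p - x)^k` for `0 ≤ k ≤ n`. -/
noncomputable def idealJ (p n : ℕ) : Ideal (Polynomial ℤ) :=
  Ideal.span {g | ∃ k ≤ n,
    g = Polynomial.C ((p : ℤ) ^ (n - k)) * (Polynomial.X ^ p - Polynomial.X) ^ k}

/-!
Both ideals are cut out by divisibility conditions on the coordinates in a basis of `ℤ[X]` with
one monic element in each degree `d`. For `I_n` take the falling factorials
`x (x - 1) ⋯ (x - d + 1)`: their values at `0, 1, …, d` form a unitriangular system with diagonal
entries `d!`, so `f ∈ I_n` iff `p ^ (n - α_p(d))` divides the `d`-th coordinate of `f`. For `J_n`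
take `X ^ r (X ^ p - X) ^ k` with `d = p k + r`, `r < p`; the `ℤ`-span of
`p ^ (n - k) X ^ r (X ^ p - X) ^ k` is stable under multiplication by `X`, hence equals `J_n`.
The index of such a lattice is the product of the divisors, and
`∑_d (n - α_p(d)) = ∑_{k ≤ n} β_p(k)` since both sides count the pairs with `α_p(d) < k ≤ n`
(`β_p` is the lower adjoint of `α_p`). Finally `J_n ⊆ I_n` by Fermat's little theorem, so the two
ideals agree iff their indices do, i.e. iff `β_p(k) = k p` for all `k ≤ n`, i.e. iff `n ≤ p`.
-/

open Polynomial Finset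
open scoped Nat

namespace Module.Basis

variable {ι R M : Type*} [CommRing R] [AddCommGroup M]

theorem mem_span_smul_iff [Module R M] (b : Basis ι R M) (c : ι → R) (x : M) :
    x ∈ Submodule.span R (Set.range fun i => c i • b i) ↔ ∀ i, c i ∣ b.repr x i := by
  constructor
  · intro hx
    induction hx using Submodule.span_induction with
    | mem y hy =>
      obtain ⟨i, rfl⟩ := hy
      intro j
      classical
      rw [b.repr.map_smul, repr_self, Finsupp.smul_apply, Finsupp.single_apply]
      split_ifs with h
      · exact h ▸ dvd_mul_right _ _
      · simp
    | zero => simp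
    | add y z _ _ hy hz => exact fun i => by simpa using dvd_add (hy i) (hz i)
    | smul a y _ hy => exact fun i => by simpa using (hy i).mul_left a
  · intro hx
    rw [← b.linearCombination_repr x, Finsupp.linearCombination_apply]
    refine Submodule.sum_mem _ fun i _ => ?_
    obtain ⟨q, hq⟩ := hx i
    simp only [hq, mul_comm (c i), mul_smul]
    exact Submodule.smul_mem _ q (Submodule.subset_span ⟨i, rfl⟩)

theorem index_eq_prod_of_mem_iff (b : Basis ι ℤ M) (c : ι → ℕ) (hc : ∀ i, c i ≠ 0) (s : Finset ι)
    (hs : ∀ i ∉ s, c i = 1) (H : AddSubgroup M) (hH : ∀ x, x ∈ H ↔ ∀ i, (c i : ℤ) ∣ b.repr x i) :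
    H.index = ∏ i ∈ s, c i := by
  have (i : s) : NeZero (c i) := ⟨hc i⟩
  let reduce : M →+ ((i : s) → ZMod (c i)) :=
    { toFun x i := (b.repr x i : ZMod (c i))
      map_zero' := by ext; simp
      map_add' x y := by ext; simp }
  have hker : reduce.ker = H := by
    ext x
    rw [hH, AddMonoidHom.mem_ker, funext_iff]
    refine ⟨fun h i => ?_, fun h i => (ZMod.intCast_zmod_eq_zero_iff_dvd _ _).mpr (h i)⟩
    by_cases hi : i ∈ s
    · exact (ZMod.intCast_zmod_eq_zero_iff_dvd _ _).mp (h ⟨i, hi⟩)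
    · simp [hs i hi]
  have hsurj : Function.Surjective reduce := by
    intro v
    refine ⟨b.repr.symm (Finsupp.indicator s fun i hi => ((v ⟨i, hi⟩).val : ℤ)), funext fun i => ?_⟩
    simp [reduce, Finsupp.indicator_of_mem i.2]
  rw [← hker, AddSubgroup.index_ker, AddMonoidHom.range_eq_top.mpr hsurj,
    Nat.card_congr AddSubgroup.topEquiv.toEquiv, Nat.card_pi]
  simp only [Nat.card_zmod]
  exact Finset.prod_coe_sort s c

end Module.Basis

theorem sum_range_tsub_eq_sum_Icc {a β : ℕ → ℕ} (gc : GaloisConnection β a) (n : ℕ) :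
    ∑ d ∈ range (β n), (n - a d) = ∑ k ∈ Icc 1 n, β k := by
  have hrow (d : ℕ) : n - a d = #{k ∈ Icc 1 n | a d < k} := by
    rw [show {k ∈ Icc 1 n | a d < k} = Ioc (a d) n by
      ext; simp only [mem_filter, mem_Icc, mem_Ioc]; omega, Nat.card_Ioc]
  have hcol (k : ℕ) (hk : k ∈ Icc 1 n) : β k = #{d ∈ range (β n) | a d < k} := by
    have hmono : β k ≤ β n := gc.monotone_l (mem_Icc.mp hk).2
    rw [show {d ∈ range (β n) | a d < k} = range (β k) by
      ext d; simp only [mem_filter, mem_range, ← gc.lt_iff_lt]; omega, card_range]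
  simp_rw [hrow, card_filter]
  rw [sum_comm]
  refine sum_congr rfl fun k hk => ?_
  rw [hcol k hk, card_filter]

theorem Module.Basis.index_eq_pow_sum_of_mem_iff {M : Type*} [AddCommGroup M]
    (b : Basis ℕ ℤ M) {p : ℕ} (hp : p ≠ 0) {a β : ℕ → ℕ} (gc : GaloisConnection β a) (n : ℕ)
    (H : AddSubgroup M) (hH : ∀ x, x ∈ H ↔ ∀ d, (p : ℤ) ^ (n - a d) ∣ b.repr x d) :
    H.index = p ^ ∑ k ∈ Icc 1 n, β k := by
  have hc (d : ℕ) (hd : d ∉ range (β n)) : p ^ (n - a d) = 1 := by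
    rw [mem_range, not_lt, gc.le_iff_le] at hd
    rw [Nat.sub_eq_zero_of_le hd, pow_zero]
  rw [b.index_eq_prod_of_mem_iff (fun d => p ^ (n - a d)) (fun d => pow_ne_zero _ hp) _ hc H
    (by simpa using hH), prod_pow_eq_pow_sum, sum_range_tsub_eq_sum_Icc gc]

section AlphaBeta

variable {p : ℕ} [hp : Fact p.Prime]

theorem monotone_alphaP : Monotone (alphaP p) := fun _ e h =>
  (padicValNat_dvd_iff_le (Nat.factorial_ne_zero e)).mp
    (pow_padicValNat_dvd.trans (Nat.factorial_dvd_factorial h))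

theorem alphaP_eq_div_add (d : ℕ) : alphaP p d = d / p + alphaP p (d / p) := by
  rw [alphaP, alphaP, ← padicValNat_mul_div_factorial, padicValNat_factorial_mul, add_comm]

theorem alphaP_eq_zero_iff {m : ℕ} : alphaP p m = 0 ↔ m < p := by
  simp [alphaP, padicValNat.eq_zero_iff, hp.out.ne_one, Nat.factorial_ne_zero,
    hp.out.dvd_factorial]

theorem le_alphaP_mul (k : ℕ) : k ≤ alphaP p (k * p) := by
  rw [alphaP_eq_div_add, Nat.mul_div_cancel _ hp.out.pos]
  exact Nat.le_add_right _ _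

theorem gc_betaP_alphaP : GaloisConnection (betaP p) (alphaP p) := fun k _ =>
  ⟨fun h => (Nat.sInf_mem (⟨_, le_alphaP_mul k⟩ : {m | k ≤ alphaP p m}.Nonempty)).trans
    (monotone_alphaP h), fun h => Nat.sInf_le h⟩

theorem betaP_le_mul (k : ℕ) : betaP p k ≤ k * p :=
  gc_betaP_alphaP.le_iff_le.mpr (le_alphaP_mul k)

theorem betaP_eq_mul_iff {k : ℕ} : betaP p k = k * p ↔ k ≤ p := by
  have hp0 := hp.out.pos
  refine ⟨fun h => ?_, fun hk => (betaP_le_mul k).antisymm ?_⟩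
  · by_contra! hpk
    have hle : betaP p k ≤ (k - 1) * p := by
      rw [gc_betaP_alphaP.le_iff_le, alphaP_eq_div_add, Nat.mul_div_cancel _ hp0]
      have : alphaP p (k - 1) ≠ 0 := by rw [Ne, alphaP_eq_zero_iff]; omega
      omega
    have : (k - 1) * p < k * p := Nat.mul_lt_mul_of_pos_right (by omega) hp0
    omega
  · by_contra! hlt
    have hk := gc_betaP_alphaP.le_iff_le.mp (le_refl (betaP p k))
    have hdiv : betaP p k / p < k := Nat.div_lt_of_lt_mul (by rwa [mul_comm])
    rw [alphaP_eq_div_add, alphaP_eq_zero_iff.mpr (by omega)] at hk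
    omega

theorem sum_betaP_eq_sum_mul_iff (n : ℕ) :
    ∑ k ∈ Icc 1 n, betaP p k = ∑ k ∈ Icc 1 n, k * p ↔ n ≤ p := by
  rw [sum_eq_sum_iff_of_le fun k _ => betaP_le_mul k]
  simp only [betaP_eq_mul_iff, mem_Icc]
  constructor
  · intro h
    rcases Nat.eq_zero_or_pos n with rfl | hn
    · exact Nat.zero_le p
    · exact h n ⟨hn, le_rfl⟩
  · exact fun h k hk => hk.2.trans h

end AlphaBeta

theorem pow_sub_padicValNat_dvd {p : ℕ} [Fact p.Prime] {n m : ℕ} (hm : m ≠ 0) {c : ℤ}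
    (h : (p : ℤ) ^ n ∣ m * c) : (p : ℤ) ^ (n - padicValNat p m) ∣ c := by
  rcases eq_or_ne c 0 with rfl | hc
  · exact dvd_zero _
  have hm' : (m : ℤ) ≠ 0 := by exact_mod_cast hm
  rw [padicValInt_dvd_iff, or_iff_right (mul_ne_zero hm' hc), padicValInt.mul hm' hc,
    padicValInt.of_nat] at h
  rw [padicValInt_dvd_iff]
  omega

theorem factorial_dvd_descPochhammer_eval (d : ℕ) (x : ℤ) :
    (d ! : ℤ) ∣ (descPochhammer ℤ d).eval x := by
  rw [eval_eq_smeval, Ring.descPochhammer_eq_factorial_smul_choose, nsmul_eq_mul]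
  exact dvd_mul_right _ _

noncomputable def descPochhammerBasis : Module.Basis ℕ ℤ ℤ[X] :=
  Polynomial.Sequence.basis ⟨descPochhammer ℤ, fun d => by
    rw [degree_eq_natDegree (monic_descPochhammer ℤ d).ne_zero, descPochhammer_natDegree]⟩
    fun d => by simp [(monic_descPochhammer ℤ d).leadingCoeff]

theorem descPochhammerBasis_apply (d : ℕ) : descPochhammerBasis d = descPochhammer ℤ d :=
  Polynomial.Sequence.basis_eq_self _ _ d

theorem eval_eq_sum_descPochhammerBasis_repr (f : ℤ[X]) (x : ℤ) :
    f.eval x = (descPochhammerBasis.repr f).sum fun j c => c * (descPochhammer ℤ j).eval x := by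
  conv_lhs => rw [← descPochhammerBasis.linearCombination_repr f]
  simp [Finsupp.linearCombination_apply, Finsupp.sum, eval_finsetSum, descPochhammerBasis_apply]

theorem dvd_factorial_mul_of_dvd_sum_descFactorial {m : ℤ} (a : ℕ →₀ ℤ)
    (h : ∀ k : ℕ, m ∣ a.sum fun j c => c * k.descFactorial j) (d : ℕ) : m ∣ d ! * a d := by
  induction d using Nat.strong_induction_on with
  | _ d ih =>
  by_cases hd : a d = 0
  · simp [hd]
  have hsplit := Finset.sum_erase_add _ (fun j => a j * (d.descFactorial j : ℤ))
    (Finsupp.mem_support_iff.mpr hd)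
  rw [Nat.descFactorial_self, mul_comm] at hsplit
  have hd' := h d
  rw [Finsupp.sum, ← hsplit] at hd'
  refine (dvd_add_right (dvd_sum fun j hj => ?_)).mp hd'
  rcases lt_or_gt_of_ne (ne_of_mem_erase hj) with hj | hj
  · rw [Nat.descFactorial_eq_factorial_mul_choose, Nat.cast_mul, ← mul_assoc, mul_comm (a j)]
    exact (ih j hj).mul_right _
  · simp [Nat.descFactorial_eq_zero_iff_lt.mpr hj]

theorem pow_dvd_pow_sub_alphaP_mul_eval_descPochhammer {p : ℕ} [Fact p.Prime] (n d : ℕ) (x : ℤ) :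
    (p : ℤ) ^ n ∣ (p : ℤ) ^ (n - alphaP p d) * (descPochhammer ℤ d).eval x := by
  have hα : (p : ℤ) ^ alphaP p d ∣ (descPochhammer ℤ d).eval x :=
    (Int.natCast_dvd_natCast.mpr pow_padicValNat_dvd).trans (factorial_dvd_descPochhammer_eval d x)
  calc (p : ℤ) ^ n ∣ (p : ℤ) ^ (n - alphaP p d + alphaP p d) := pow_dvd_pow _ (by omega)
    _ = (p : ℤ) ^ (n - alphaP p d) * (p : ℤ) ^ alphaP p d := pow_add _ _ _
    _ ∣ _ := mul_dvd_mul_left _ hα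

theorem mem_idealI_iff {p : ℕ} [Fact p.Prime] {n : ℕ} {f : ℤ[X]} :
    f ∈ idealI p n ↔ ∀ d, (p : ℤ) ^ (n - alphaP p d) ∣ descPochhammerBasis.repr f d := by
  have heval := eval_eq_sum_descPochhammerBasis_repr f
  constructor
  · intro hf d
    refine pow_sub_padicValNat_dvd (Nat.factorial_ne_zero d)
      (dvd_factorial_mul_of_dvd_sum_descFactorial _ (fun k => ?_) d)
    simpa [heval, descPochhammer_eval_eq_descFactorial] using hf k
  · intro hf x
    rw [heval]
    refine dvd_sum fun d _ => ?_
    obtain ⟨q, hq⟩ := hf d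
    dsimp only
    rw [hq, mul_right_comm]
    exact (pow_dvd_pow_sub_alphaP_mul_eval_descPochhammer n d x).mul_right q

theorem Polynomial.mul_mem_of_forall_X_mul_mem {R : Type*} [CommRing R] {N : Submodule R R[X]}
    (hX : ∀ f ∈ N, X * f ∈ N) (q : R[X]) {f : R[X]} (hf : f ∈ N) : q * f ∈ N := by
  induction q using Polynomial.induction_on' with
  | add u v hu hv => rw [add_mul]; exact N.add_mem hu hv
  | monomial i a =>
    rw [← C_mul_X_pow_eq_monomial, mul_assoc, ← smul_eq_C_mul]
    refine N.smul_mem a ?_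
    induction i with
    | zero => simpa
    | succ i ih => rw [pow_succ', mul_assoc]; exact hX _ ih

theorem Nat.add_mul_div_eq_of_lt {r p : ℕ} (hr : r < p) (k : ℕ) : (r + p * k) / p = k := by
  rw [Nat.add_mul_div_left _ _ (by omega), Nat.div_eq_of_lt hr, zero_add]

section FermatBasis

variable {p : ℕ} (hp : 1 < p)
include hp

theorem monic_X_pow_sub_X : (X ^ p - X : ℤ[X]).Monic :=
  monic_X_pow_sub (by rw [degree_X]; exact_mod_cast hp)

theorem natDegree_X_pow_sub_X : (X ^ p - X : ℤ[X]).natDegree = p := by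
  rw [natDegree_sub_eq_left_of_natDegree_lt] <;> simp [hp]

theorem monic_X_pow_mul_X_pow_sub_X_pow (r k : ℕ) : (X ^ r * (X ^ p - X) ^ k : ℤ[X]).Monic :=
  (monic_X_pow r).mul ((monic_X_pow_sub_X hp).pow k)

theorem natDegree_X_pow_mul_X_pow_sub_X_pow (r k : ℕ) :
    (X ^ r * (X ^ p - X) ^ k : ℤ[X]).natDegree = r + p * k := by
  rw [(monic_X_pow r).natDegree_mul ((monic_X_pow_sub_X hp).pow k),
    (monic_X_pow_sub_X hp).natDegree_pow, natDegree_X_pow_sub_X hp, natDegree_X_pow, mul_comm]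

noncomputable def fermatBasis : Module.Basis ℕ ℤ ℤ[X] :=
  Polynomial.Sequence.basis ⟨fun d => X ^ (d % p) * (X ^ p - X) ^ (d / p), fun d => by
    rw [degree_eq_natDegree (monic_X_pow_mul_X_pow_sub_X_pow hp _ _).ne_zero,
      natDegree_X_pow_mul_X_pow_sub_X_pow hp, Nat.mod_add_div]⟩
    fun d => by simp [(monic_X_pow_mul_X_pow_sub_X_pow hp _ _).leadingCoeff]

theorem fermatBasis_apply (d : ℕ) : fermatBasis hp d = X ^ (d % p) * (X ^ p - X) ^ (d / p) :=
  Polynomial.Sequence.basis_eq_self _ _ d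

theorem fermatBasis_add_mul {r : ℕ} (hr : r < p) (k : ℕ) :
    fermatBasis hp (r + p * k) = X ^ r * (X ^ p - X) ^ k := by
  rw [fermatBasis_apply, Nat.add_mul_mod_self_left, Nat.mod_eq_of_lt hr,
    Nat.add_mul_div_eq_of_lt hr]

end FermatBasis

section IdealJ

variable {p : ℕ} (hp : 1 < p) (n : ℕ)
include hp

noncomputable def spanJ : Submodule ℤ ℤ[X] :=
  Submodule.span ℤ (Set.range fun d => (p : ℤ) ^ (n - d / p) • fermatBasis hp d)

theorem smul_X_pow_mul_mem_spanJ {r : ℕ} (hr : r < p) (k : ℕ) :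
    (p : ℤ) ^ (n - k) • (X ^ r * (X ^ p - X) ^ k) ∈ spanJ hp n := by
  have hmem : (p : ℤ) ^ (n - (r + p * k) / p) • fermatBasis hp (r + p * k) ∈ spanJ hp n :=
    Submodule.subset_span ⟨r + p * k, rfl⟩
  rwa [Nat.add_mul_div_eq_of_lt hr, fermatBasis_add_mul hp hr] at hmem

theorem X_mul_mem_spanJ : ∀ f ∈ spanJ hp n, X * f ∈ spanJ hp n := by
  suffices spanJ hp n ≤ (spanJ hp n).comap (LinearMap.mulLeft ℤ X) from fun f hf => this hf
  refine Submodule.span_le.mpr ?_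
  rintro _ ⟨d, rfl⟩
  obtain ⟨r, k, hr, rfl⟩ : ∃ r k, r < p ∧ d = r + p * k :=
    ⟨d % p, d / p, Nat.mod_lt _ (by omega), (Nat.mod_add_div d p).symm⟩
  simp only [SetLike.mem_coe, Submodule.mem_comap, LinearMap.mulLeft_apply,
    Nat.add_mul_div_eq_of_lt hr,
    fermatBasis_add_mul hp hr, mul_smul_comm]
  rcases (show r + 1 ≤ p by omega).lt_or_eq with hr1 | hr1
  · rw [← mul_assoc, ← pow_succ']
    exact smul_X_pow_mul_mem_spanJ hp n hr1 k
  · -- `r + 1 = p`: writing `X ^ p = (X ^ p - X) + X` carries into the next power of `X ^ p - X`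
    have hsplit : X * (X ^ r * (X ^ p - X) ^ k) =
        X ^ 0 * (X ^ p - X) ^ (k + 1) + X ^ 1 * (X ^ p - X : ℤ[X]) ^ k := by
      rw [← hr1]; ring
    rw [hsplit, smul_add]
    refine add_mem ?_ (smul_X_pow_mul_mem_spanJ hp n hp k)
    rw [show n - k = (n - k - (n - (k + 1))) + (n - (k + 1)) by omega, pow_add, mul_smul]
    exact Submodule.smul_mem _ _ (smul_X_pow_mul_mem_spanJ hp n (by omega) (k + 1))

theorem mem_idealJ_iff_mem_spanJ {f : ℤ[X]} : f ∈ idealJ p n ↔ f ∈ spanJ hp n := by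
  constructor
  · intro hf
    induction hf using Submodule.span_induction with
    | mem x hx =>
      obtain ⟨k, -, rfl⟩ := hx
      simpa [smul_eq_C_mul] using smul_X_pow_mul_mem_spanJ hp n (r := 0) (by omega) k
    | zero => exact zero_mem _
    | add x y _ _ hx hy => exact add_mem hx hy
    | smul q x _ hx => exact mul_mem_of_forall_X_mul_mem (X_mul_mem_spanJ hp n) q hx
  · suffices spanJ hp n ≤ (idealJ p n).restrictScalars ℤ from fun hf => this hf
    refine Submodule.span_le.mpr ?_
    rintro _ ⟨d, rfl⟩
    show (p : ℤ) ^ (n - d / p) • fermatBasis hp d ∈ idealJ p n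
    set k := min (d / p) n
    have hpow : (X ^ p - X : ℤ[X]) ^ (d / p) = (X ^ p - X) ^ k * (X ^ p - X) ^ (d / p - k) := by
      rw [← pow_add]; congr 1; omega
    have hgen : C ((p : ℤ) ^ (n - k)) * (X ^ p - X) ^ k ∈ idealJ p n :=
      Ideal.subset_span ⟨k, min_le_right _ _, rfl⟩
    convert Ideal.mul_mem_right (X ^ (d % p) * (X ^ p - X) ^ (d / p - k)) _ hgen using 1
    rw [fermatBasis_apply, smul_eq_C_mul, hpow, show n - d / p = n - k by omega]
    ring

theorem mem_idealJ_iff {f : ℤ[X]} :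
    f ∈ idealJ p n ↔ ∀ d, (p : ℤ) ^ (n - d / p) ∣ (fermatBasis hp).repr f d := by
  rw [mem_idealJ_iff_mem_spanJ hp, spanJ, Module.Basis.mem_span_smul_iff]

end IdealJ

theorem idealJ_le_idealI {p : ℕ} (hp : p.Prime) (n : ℕ) : idealJ p n ≤ idealI p n := by
  refine Ideal.span_le.mpr ?_
  rintro _ ⟨k, hk, rfl⟩ a
  simp only [eval_mul, eval_C, eval_pow, eval_sub, eval_X]
  calc (p : ℤ) ^ n = (p : ℤ) ^ (n - k) * (p : ℤ) ^ k := by rw [← pow_add]; congr 1; omega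
    _ ∣ _ := mul_dvd_mul_left _ (pow_dvd_pow_of_dvd (Int.prime_dvd_pow_self_sub hp a) k)

theorem AddSubgroup.eq_iff_index_eq_of_le {G : Type*} [AddGroup G] {H K : AddSubgroup G}
    (h : H ≤ K) [H.FiniteIndex] : H = K ↔ H.index = K.index :=
  ⟨fun e => e ▸ rfl, fun hi => by_contra fun hne => (index_strictAnti (h.lt_of_ne hne)).ne hi.symm⟩

theorem idealI_idealJ_indices_general (p : ℕ) (hp : p.Prime) (n : ℕ) :
    (idealI p n).toAddSubgroup.index = p ^ (∑ k ∈ Finset.Icc 1 n, betaP p k) ∧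
    (idealJ p n).toAddSubgroup.index = p ^ (∑ k ∈ Finset.Icc 1 n, k * p) ∧
    (idealJ p n = idealI p n ↔ n ≤ p) ∧
    (p < n → idealJ p n < idealI p n) := by
  have := Fact.mk hp
  have hI : (idealI p n).toAddSubgroup.index = p ^ ∑ k ∈ Icc 1 n, betaP p k :=
    descPochhammerBasis.index_eq_pow_sum_of_mem_iff hp.ne_zero gc_betaP_alphaP n _
      fun _ => mem_idealI_iff
  have hJ : (idealJ p n).toAddSubgroup.index = p ^ ∑ k ∈ Icc 1 n, k * p :=
    (fermatBasis hp.one_lt).index_eq_pow_sum_of_mem_iff hp.ne_zero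
      (Nat.galoisConnection_mul_div hp.pos) n _ fun _ => mem_idealJ_iff hp.one_lt n
  have hJI := idealJ_le_idealI hp n
  have : (idealJ p n).toAddSubgroup.FiniteIndex := ⟨by rw [hJ]; exact pow_ne_zero _ hp.ne_zero⟩
  have hiff : idealJ p n = idealI p n ↔ n ≤ p := by
    rw [← Submodule.toAddSubgroup_inj,
      AddSubgroup.eq_iff_index_eq_of_le (Submodule.toAddSubgroup_mono hJI), hI, hJ,
      (Nat.pow_right_injective hp.two_le).eq_iff, eq_comm, sum_betaP_eq_sum_mul_iff]
  exact ⟨hI, hJ, hiff, fun hpn => hJI.lt_of_ne (mt hiff.mp (by omega))⟩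

/-- `[ℤ[x] : I_n] = p^{β_p(1)+⋯+β_p(n)}`, `[ℤ[x] : J_n] = p^{p+2p+⋯+np}`,
and `J_n = I_n` if and only if `n ≤ p`; for `n > p` the inclusion
`J_n ⊂ I_n` is proper. -/
theorem idealI_idealJ_indices (p : ℕ) (hp : p.Prime) (n : ℕ) (hn : 1 ≤ n) :
    (idealI p n).toAddSubgroup.index = p ^ (∑ k ∈ Finset.Icc 1 n, betaP p k) ∧
    (idealJ p n).toAddSubgroup.index = p ^ (∑ k ∈ Finset.Icc 1 n, k * p) ∧
    (idealJ p n = idealI p n ↔ n ≤ p) ∧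
    (p < n → idealJ p n < idealI p n) :=
  idealI_idealJ_indices_general p hp n
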